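/- Let N ≥ 1, let β > 0 and let E : Fin N → ℝ satisfy Σ_k exp(−β E_k) = 1. Set λ_k = exp(−β E_k) and let S̃ be the modified Rényi entropy of λ. Then the derivative of S̃ at n = 1 equals minus β² times the variance of the energy: S̃'(1) = −β²·[ Σ_k exp(−β E_k) E_k² − (Σ_k exp(−β E_k) E_k)² ]. -/

import Mathlib

open scoped BigOperators

/-- The modified Rényi entropy `S̃(n) = log(Σ_k λ_k^n) − n·(Σ_k λ_k^n log λ_k)/(Σ_k λ_k^n)`
of a strictly positive vector `λ`, as a function of a real variable `n`. -/
noncomputable def modifiedRenyi {N : ℕ} (lam : Fin N → ℝ) (n : ℝ) : ℝ :=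
  Real.log (∑ k, lam k ^ n) -
    n * (∑ k, lam k ^ n * Real.log (lam k)) / (∑ k, lam k ^ n)

/-!
Writing `Z(n) = Σ λ_k^n` and `Mⱼ(n) = Σ λ_k^n (log λ_k)^j`, one has `Z' = M₁` and `M₁' = M₂`, so
`S̃ = log Z − n M₁ / Z` has derivative `M₁/Z − M₁/Z − n (M₂ Z − M₁²)/Z² = −n · Var_n(log λ)`,
the variance being taken for the escort distribution `λ_k^n / Z(n)`. For `λ_k = exp(−β E_k)`
normalised at `n = 1` we have `log λ_k = −β E_k`, and the variance becomes `β² Var(E)`.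
-/

open Real

section PowerSums

variable {ι : Type*} [Fintype ι] {lam : ι → ℝ}

theorem hasDerivAt_sum_rpow_mul (hlam : ∀ k, 0 < lam k) (f : ι → ℝ) (n : ℝ) :
    HasDerivAt (fun n => ∑ k, lam k ^ n * f k) (∑ k, lam k ^ n * log (lam k) * f k) n :=
  HasDerivAt.fun_sum fun k _ =>
    ((hasStrictDerivAt_const_rpow (hlam k) n).hasDerivAt).mul_const (f k)

theorem hasDerivAt_sum_rpow (hlam : ∀ k, 0 < lam k) (n : ℝ) :
    HasDerivAt (fun n => ∑ k, lam k ^ n) (∑ k, lam k ^ n * log (lam k)) n := by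
  simpa using hasDerivAt_sum_rpow_mul hlam (fun _ => 1) n

end PowerSums

theorem hasDerivAt_modifiedRenyi {N : ℕ} {lam : Fin N → ℝ} (hlam : ∀ k, 0 < lam k) {n : ℝ}
    (hZ : ∑ k, lam k ^ n ≠ 0) :
    HasDerivAt (modifiedRenyi lam)
      (-n * ((∑ k, lam k ^ n) * (∑ k, lam k ^ n * log (lam k) ^ 2) -
        (∑ k, lam k ^ n * log (lam k)) ^ 2) / (∑ k, lam k ^ n) ^ 2) n := by
  have hZ' := hasDerivAt_sum_rpow hlam n
  have hM₁ := hasDerivAt_sum_rpow_mul hlam (fun k => log (lam k)) n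
  refine ((hZ'.log hZ).fun_sub (((hasDerivAt_id' n).fun_mul hM₁).fun_div hZ' hZ)).congr_deriv ?_
  field_simp
  simp only [sq, mul_assoc]
  ring

theorem deriv_modifiedRenyi_boltzmann_at_one_general {N : ℕ} (β : ℝ)
    (E : Fin N → ℝ) (hnorm : ∑ k, Real.exp (-β * E k) = 1) :
    deriv (modifiedRenyi (fun k => Real.exp (-β * E k))) 1 =
      -β ^ 2 * ((∑ k, Real.exp (-β * E k) * E k ^ 2) -
        (∑ k, Real.exp (-β * E k) * E k) ^ 2) := by
  have hZ : ∑ k, Real.exp (-β * E k) ^ (1 : ℝ) ≠ 0 := by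
    simpa only [rpow_one, hnorm] using one_ne_zero
  rw [(hasDerivAt_modifiedRenyi (fun k => exp_pos _) hZ).deriv]
  simp only [rpow_one, log_exp, hnorm]
  have hM₁ : ∑ k, exp (-β * E k) * (-β * E k) = -β * ∑ k, exp (-β * E k) * E k := by
    rw [Finset.mul_sum]; exact Finset.sum_congr rfl fun k _ => by ring
  have hM₂ : ∑ k, exp (-β * E k) * (-β * E k) ^ 2 = β ^ 2 * ∑ k, exp (-β * E k) * E k ^ 2 := by
    rw [Finset.mul_sum]; exact Finset.sum_congr rfl fun k _ => by ring
  rw [hM₁, hM₂]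
  ring

/-- Let `N ≥ 1`, `β > 0` and `E : Fin N → ℝ` with `Σ_k exp(−β E_k) = 1`.
Setting `λ_k = exp(−β E_k)`, the derivative of the modified Rényi entropy of `λ` at `n = 1`
equals minus `β²` times the variance of the energy:
`S̃'(1) = −β²·[ Σ_k exp(−β E_k) E_k² − (Σ_k exp(−β E_k) E_k)² ]`. -/
theorem deriv_modifiedRenyi_boltzmann_at_one {N : ℕ} (hN : 1 ≤ N) (β : ℝ) (hβ : 0 < β)
    (E : Fin N → ℝ) (hnorm : ∑ k, Real.exp (-β * E k) = 1) :
    deriv (modifiedRenyi (fun k => Real.exp (-β * E k))) 1 =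
      -β ^ 2 * ((∑ k, Real.exp (-β * E k) * E k ^ 2) -
        (∑ k, Real.exp (-β * E k) * E k) ^ 2) :=
  deriv_modifiedRenyi_boltzmann_at_one_general β E hnorm
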